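/- arXiv:1703.10101 — 2 statements merged into one kernel-verified Lean document; each statement's English description precedes it below -/
import Mathlib

section
/- Let (L_n) be an inverse system of finite groups with surjective transition maps L_{n+1} → L_n and limit L_∞. Suppose k ≥ 2, and for all n ≥ n_1 the quantities ζ_n(k-1) := Σ_{[M] ∈ G(L_{n+1}|L_n)} 1/[L_{n+1}:M]^{k-1} satisfy ζ_n(k-1) < 1 and Σ_{n ≥ n_1} ζ_n(k-1) < ∞, and L_{n_1} is generated by k elements. Then inf_n p_k(L_n) ≥ ∏_{n ≥ n_1}(1 - ζ_n(k-1)) · p_k(L_{n_1}) > 0; hence L_∞ is positively finitely generated. -/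
/-!
Bhattacharjee's estimate. Let `π : G → H` be a surjection of finite groups with kernel `K`. A
generating `k`-tuple of `H` has `|K|^k` lifts to `G`, and a lift that does not generate `G` lies
in a maximal subgroup `N` with `π(N) = H`. Such an `N` is conjugate to one of the
representatives `M`, has at most `[G:M]` conjugates, and contains `(|K| / [G:M])^k` lifts of
the tuple. So at most a fraction `ζ(k-1) = Σ_M [G:M]^{-(k-1)}` of the lifts fails to generate,
which gives `p_k(G) ≥ (1 - ζ(k-1)) p_k(H)`. Since also `p_k(G) ≤ p_k(H)`, iterating from `n₁`
bounds every `p_k(L_n)` below by `∏ (1 - ζ_n) p_k(L_{n₁})`. This product is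
`exp (Σ log (1 - ζ_n))`, and it is positive because `Σ ζ_n < ∞`.
-/

/-- The probability that a uniformly random `k`-tuple of elements of `G` generates `G`. -/
noncomputable def pgen (k : ℕ) (G : Type*) [Group G] : ℝ :=
  (Nat.card {v : Fin k → G // Subgroup.closure (Set.range v) = ⊤} : ℝ) /
    (Nat.card G : ℝ) ^ k

/-- `R` is a set of representatives of the `Y`-conjugacy classes of proper maximal
subgroups of `Y` surjecting onto `X` (the set `G(Y|X)` of the paper). -/
def IsConjClassReps {Y X : Type*} [Group Y] [Group X] (π : Y →* X)
    (R : Finset (Subgroup Y)) : Prop :=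
  (∀ M ∈ R, IsCoatom M ∧ M.map π = ⊤) ∧
    ∀ N : Subgroup Y, IsCoatom N → N.map π = ⊤ →
      ∃! M, M ∈ R ∧ ∃ y : Y, Subgroup.map (MulAut.conj y).toMonoidHom N = M

open Finset

section

variable {G H : Type*} [Group G] [Group H]

namespace MonoidHom

lemma card_ker_mul_card_of_surjective {π : G →* H} (hπ : Function.Surjective π) :
    Nat.card π.ker * Nat.card H = Nat.card G := by
  rw [← π.ker.card_mul_index, Subgroup.index_ker, range_eq_top.2 hπ, Subgroup.card_top]

lemma domRestrict_surjective_of_map_eq_top {π : G →* H} {N : Subgroup G} (hN : N.map π = ⊤) :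
    Function.Surjective (π.domRestrict N) := by
  rw [← range_eq_top, domRestrict_range, hN]

lemma card_ker_domRestrict_mul_index [Finite H] {π : G →* H} (hπ : Function.Surjective π)
    {N : Subgroup G} (hπN : Function.Surjective (π.domRestrict N)) :
    Nat.card (π.domRestrict N).ker * N.index = Nat.card π.ker := by
  apply Nat.eq_of_mul_eq_mul_right (Nat.card_pos (α := H))
  rw [card_ker_mul_card_of_surjective hπ, ← N.card_mul_index,
    ← card_ker_mul_card_of_surjective hπN]
  ring

lemma card_pi_fiber_eq_card_ker_pow {ι : Type*} [Fintype ι] {π : G →* H}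
    (hπ : Function.Surjective π) (v : ι → H) :
    Nat.card {w : ι → G // π ∘ w = v} = Nat.card π.ker ^ Fintype.card ι := by
  calc Nat.card {w : ι → G // π ∘ w = v}
      = Nat.card (∀ i, π ⁻¹' {v i}) :=
        Nat.card_congr <| (Equiv.subtypeEquivRight fun w => by simp [funext_iff]).trans
          (Equiv.subtypePiEquivPi (p := fun i g => π g = v i))
    _ = Nat.card π.ker ^ Fintype.card ι := by
        simp [Nat.card_pi, Nat.card_congr (fiberEquivKerOfSurjective hπ _)]

end MonoidHom

open scoped Classical in
noncomputable def liftsIn [Fintype G] {k : ℕ} (π : G →* H) (N : Subgroup G) (v : Fin k → H) :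
    Finset (Fin k → G) :=
  {w | (∀ i, w i ∈ N) ∧ π ∘ w = v}

@[simp]
lemma mem_liftsIn [Fintype G] {k : ℕ} {π : G →* H} {N : Subgroup G} {v : Fin k → H}
    {w : Fin k → G} : w ∈ liftsIn π N v ↔ (∀ i, w i ∈ N) ∧ π ∘ w = v := by
  simp [liftsIn]

lemma card_liftsIn_mul_index_pow [Fintype G] [Finite H] {k : ℕ} {π : G →* H}
    (hπ : Function.Surjective π) {N : Subgroup G} (hN : N.map π = ⊤) (v : Fin k → H) :
    #(liftsIn π N v) * N.index ^ k = Nat.card π.ker ^ k := by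
  have hπN := MonoidHom.domRestrict_surjective_of_map_eq_top hN
  have : #(liftsIn π N v) = Nat.card {u : Fin k → N // π.domRestrict N ∘ u = v} := by
    rw [← Nat.card_eq_finsetCard]
    exact Nat.card_congr
      { toFun w := ⟨fun i => ⟨w.1 i, (mem_liftsIn.1 w.2).1 i⟩, (mem_liftsIn.1 w.2).2⟩
        invFun u := ⟨fun i => u.1 i, mem_liftsIn.2 ⟨fun i => (u.1 i).2, u.2⟩⟩
        left_inv _ := rfl
        right_inv _ := rfl }
  rw [this, MonoidHom.card_pi_fiber_eq_card_ker_pow hπN, Fintype.card_fin, ← mul_pow,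
    MonoidHom.card_ker_domRestrict_mul_index hπ hπN]

namespace Subgroup

lemma map_conj_eq_self_of_mem {M : Subgroup G} {m : G} (hm : m ∈ M) :
    M.map (MulAut.conj m).toMonoidHom = M :=
  mem_normalizer_iff_map_conj_eq.1 (le_normalizer hm)

lemma map_conj_mul (M : Subgroup G) (a b : G) :
    M.map (MulAut.conj (a * b)).toMonoidHom =
      (M.map (MulAut.conj b).toMonoidHom).map (MulAut.conj a).toMonoidHom := by
  rw [map_map, map_mul]; rfl

lemma card_image_map_conj_le_index [Fintype G] [DecidableEq (Subgroup G)] (M : Subgroup G) :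
    #(univ.image fun y => M.map (MulAut.conj y).toMonoidHom) ≤ M.index := by
  classical
  let conjOf : G ⧸ M → Subgroup G := Quotient.lift (fun y => M.map (MulAut.conj y).toMonoidHom)
    fun a b hab => by
      rw [← mul_inv_cancel_left a b, map_conj_mul,
        map_conj_eq_self_of_mem (QuotientGroup.leftRel_apply.1 hab)]
  calc #(univ.image fun y => M.map (MulAut.conj y).toMonoidHom)
      = #((univ.image (QuotientGroup.mk : G → G ⧸ M)).image conjOf) := by
        rw [image_image]; rfl
    _ ≤ Fintype.card (G ⧸ M) := card_image_le.trans (card_le_univ _)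
    _ = M.index := by rw [index, Nat.card_eq_fintype_card]

lemma index_map_conj (M : Subgroup G) (y : G) :
    (M.map (MulAut.conj y).toMonoidHom).index = M.index :=
  M.index_map_equiv (MulAut.conj y)

lemma map_map_conj_eq_top {π : G →* H} {M : Subgroup G} (hM : M.map π = ⊤) (y : G) :
    (M.map (MulAut.conj y).toMonoidHom).map π = ⊤ := by
  have : π.comp (MulAut.conj y).toMonoidHom = (MulAut.conj (π y)).toMonoidHom.comp π := by
    ext; simp
  rw [map_map, this, ← map_map, hM, map_top_of_surjective _ (MulEquiv.surjective _)]

end Subgroup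

open scoped Classical in
noncomputable def generatingTuples (k : ℕ) (G : Type*) [Group G] [Fintype G] :
    Finset (Fin k → G) :=
  {v | Subgroup.closure (Set.range v) = ⊤}

@[simp]
lemma mem_generatingTuples [Fintype G] {k : ℕ} {v : Fin k → G} :
    v ∈ generatingTuples k G ↔ Subgroup.closure (Set.range v) = ⊤ := by
  simp [generatingTuples]

lemma pgen_eq_card_div [Fintype G] (k : ℕ) :
    pgen k G = #(generatingTuples k G) / (Nat.card G : ℝ) ^ k := by
  rw [pgen, ← Nat.card_eq_finsetCard,
    Nat.card_congr (Equiv.subtypeEquivRight fun _ => mem_generatingTuples.symm)]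

lemma closure_range_comp_eq_top {k : ℕ} {π : G →* H} (hπ : Function.Surjective π)
    {w : Fin k → G} (hw : Subgroup.closure (Set.range w) = ⊤) :
    Subgroup.closure (Set.range (π ∘ w)) = ⊤ := by
  rw [Set.range_comp, ← MonoidHom.map_closure, hw, Subgroup.map_top_of_surjective π hπ]

open scoped Classical in
lemma not_generating_lifts_subset [Fintype G] {k : ℕ} {π : G →* H}
    {R : Finset (Subgroup G)} (hR : IsConjClassReps π R) {v : Fin k → H}
    (hv : Subgroup.closure (Set.range v) = ⊤) :
    {w ∈ liftsIn π ⊤ v | Subgroup.closure (Set.range w) ≠ ⊤} ⊆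
      R.biUnion fun M => (univ.image fun y => M.map (MulAut.conj y).toMonoidHom).biUnion
        fun N => liftsIn π N v := by
  intro w hw
  simp only [mem_filter, mem_liftsIn, Subgroup.mem_top, implies_true, true_and] at hw
  obtain ⟨N, hN, hwN⟩ := (eq_top_or_exists_le_coatom _).resolve_left hw.2
  have hNπ : N.map π = ⊤ := by
    refine top_le_iff.1 (le_of_eq_of_le ?_ (Subgroup.map_mono hwN))
    rw [MonoidHom.map_closure, ← Set.range_comp, hw.1, hv]
  obtain ⟨M, ⟨hMR, y, rfl⟩, -⟩ := hR.2 N hN hNπ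
  simp only [mem_biUnion, mem_image, mem_univ, true_and, mem_liftsIn]
  refine ⟨_, hMR, N, ⟨y⁻¹, ?_⟩, fun i => hwN (Subgroup.subset_closure ⟨i, rfl⟩), hw.1⟩
  rw [← Subgroup.map_conj_mul, inv_mul_cancel, Subgroup.map_conj_eq_self_of_mem N.one_mem]

lemma card_liftsIn_eq_div [Fintype G] [Finite H] {k : ℕ} {π : G →* H}
    (hπ : Function.Surjective π) {N : Subgroup G} (hN : N.map π = ⊤) (v : Fin k → H) :
    (#(liftsIn π N v) : ℝ) = (Nat.card π.ker : ℝ) ^ k / (N.index : ℝ) ^ k := by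
  have : (N.index : ℝ) ≠ 0 := Nat.cast_ne_zero.2 Subgroup.index_ne_zero_of_finite
  rw [eq_div_iff (by positivity)]
  exact_mod_cast card_liftsIn_mul_index_pow hπ hN v

lemma card_liftsIn_top [Fintype G] [Finite H] {k : ℕ} {π : G →* H}
    (hπ : Function.Surjective π) (v : Fin k → H) :
    #(liftsIn π ⊤ v) = Nat.card π.ker ^ k := by
  simpa using card_liftsIn_mul_index_pow hπ (Subgroup.map_top_of_surjective π hπ) v

open scoped Classical in
lemma card_not_generating_lifts_le [Fintype G] [Finite H] {k : ℕ} (hk : k ≠ 0)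
    {π : G →* H} (hπ : Function.Surjective π) {R : Finset (Subgroup G)}
    (hR : IsConjClassReps π R) {v : Fin k → H} (hv : Subgroup.closure (Set.range v) = ⊤) :
    (#{w ∈ liftsIn π ⊤ v | Subgroup.closure (Set.range w) ≠ ⊤} : ℝ) ≤
      (Nat.card π.ker : ℝ) ^ k * ∑ M ∈ R, 1 / (M.index : ℝ) ^ (k - 1) := by
  obtain ⟨j, rfl⟩ := Nat.exists_eq_add_one_of_ne_zero hk
  have hconj (M : Subgroup G) (hM : M ∈ R) :
      ∑ N ∈ univ.image (fun y => M.map (MulAut.conj y).toMonoidHom), (#(liftsIn π N v) : ℝ) ≤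
        (Nat.card π.ker : ℝ) ^ (j + 1) * (1 / (M.index : ℝ) ^ j) := by
    have hidx : (M.index : ℝ) ≠ 0 := Nat.cast_ne_zero.2 Subgroup.index_ne_zero_of_finite
    rw [sum_congr rfl fun N hN => ?_, sum_const, nsmul_eq_mul]
    · calc _ ≤ (M.index : ℝ) * ((Nat.card π.ker : ℝ) ^ (j + 1) / (M.index : ℝ) ^ (j + 1)) := by
            gcongr; exact_mod_cast M.card_image_map_conj_le_index
        _ = _ := by field_simp; ring
    obtain ⟨y, -, rfl⟩ := mem_image.1 hN
    rw [card_liftsIn_eq_div hπ (Subgroup.map_map_conj_eq_top (hR.1 M hM).2 y),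
      Subgroup.index_map_conj]
  calc (#{w ∈ liftsIn π ⊤ v | Subgroup.closure (Set.range w) ≠ ⊤} : ℝ)
      ≤ ∑ M ∈ R, ∑ N ∈ univ.image (fun y => M.map (MulAut.conj y).toMonoidHom),
          (#(liftsIn π N v) : ℝ) := by
        exact_mod_cast (card_le_card (not_generating_lifts_subset hR hv)).trans
          (card_biUnion_le.trans (sum_le_sum fun _ _ => card_biUnion_le))
    _ ≤ _ := by rw [mul_sum]; exact sum_le_sum hconj

open scoped Classical in
lemma pgen_eq_sum_div [Fintype G] [Fintype H] (k : ℕ) {π : G →* H}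
    (hπ : Function.Surjective π) :
    pgen k G = (∑ v ∈ generatingTuples k H,
      (#{w ∈ liftsIn π ⊤ v | Subgroup.closure (Set.range w) = ⊤} : ℝ) /
        (Nat.card π.ker : ℝ) ^ k) / (Nat.card H : ℝ) ^ k := by
  have hfiber (v : Fin k → H) : {w ∈ generatingTuples k G | π ∘ w = v} =
      {w ∈ liftsIn π ⊤ v | Subgroup.closure (Set.range w) = ⊤} := by
    ext; simp [and_comm]
  rw [pgen_eq_card_div, card_eq_sum_card_fiberwise (f := (π ∘ ·))
      (t := generatingTuples k H) fun w hw => ?_,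
    ← MonoidHom.card_ker_mul_card_of_surjective hπ, ← sum_div, div_div, Nat.cast_mul, mul_pow]
  · simp only [hfiber, Nat.cast_sum]
  · simpa using closure_range_comp_eq_top hπ (mem_generatingTuples.1 hw)

lemma pgen_le_of_surjective [Fintype G] [Fintype H] (k : ℕ) {π : G →* H}
    (hπ : Function.Surjective π) : pgen k G ≤ pgen k H := by
  classical
  rw [pgen_eq_sum_div k hπ, pgen_eq_card_div]
  gcongr
  refine (sum_le_card_nsmul _ _ 1 fun v _ => ?_).trans_eq (by simp)
  rw [div_le_one (pow_pos (Nat.cast_pos.2 Nat.card_pos) k), ← Nat.cast_pow,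
    ← card_liftsIn_top hπ v]
  exact_mod_cast card_filter_le _ _

lemma one_sub_mul_pgen_le [Fintype G] [Fintype H] {k : ℕ} (hk : k ≠ 0) {π : G →* H}
    (hπ : Function.Surjective π) {R : Finset (Subgroup G)} (hR : IsConjClassReps π R) :
    (1 - ∑ M ∈ R, 1 / (M.index : ℝ) ^ (k - 1)) * pgen k H ≤ pgen k G := by
  classical
  rw [pgen_eq_sum_div k hπ, pgen_eq_card_div, mul_div_assoc', mul_comm]
  gcongr
  refine le_of_eq_of_le (nsmul_eq_mul ..).symm (card_nsmul_le_sum _ _ _ fun v hv => ?_)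
  rw [le_div_iff₀ (pow_pos (Nat.cast_pos.2 Nat.card_pos) k)]
  have hsplit := card_filter_add_card_filter_not (s := liftsIn π ⊤ v)
    fun w => Subgroup.closure (Set.range w) = ⊤
  rw [card_liftsIn_top hπ] at hsplit
  have hbad := card_not_generating_lifts_le hk hπ hR (mem_generatingTuples.1 hv)
  rw [← Nat.cast_inj (R := ℝ), Nat.cast_add, Nat.cast_pow] at hsplit
  linarith

lemma pgen_nonneg (k : ℕ) (G : Type*) [Group G] : 0 ≤ pgen k G := by
  unfold pgen; positivity

lemma pgen_pos [Fintype G] {k : ℕ} {v : Fin k → G} (hv : Subgroup.closure (Set.range v) = ⊤) :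
    0 < pgen k G :=
  have : Nonempty {v : Fin k → G // Subgroup.closure (Set.range v) = ⊤} := ⟨⟨v, hv⟩⟩
  div_pos (Nat.cast_pos.2 Nat.card_pos) (pow_pos (Nat.cast_pos.2 Nat.card_pos) k)

end

lemma Finset.exists_fin_subset_range {α : Type*} [Nonempty α] (S : Finset α) {k : ℕ}
    (hk : #S ≤ k) : ∃ v : Fin k → α, (S : Set α) ⊆ Set.range v := by
  classical
  obtain ⟨a⟩ := ‹Nonempty α›
  refine ⟨fun i => if h : (i : ℕ) < #S then S.equivFin.symm ⟨i, h⟩ else a, fun x hx => ?_⟩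
  exact ⟨Fin.castLE hk (S.equivFin ⟨x, hx⟩), by simp⟩

lemma tprod_one_sub_pos {ι : Type*} {a : ι → ℝ} (ha : ∀ i, a i < 1) (hsum : Summable a) :
    0 < ∏' i, (1 - a i) := by
  have hlog : Summable fun i => Real.log (1 - a i) := by
    simpa [sub_eq_add_neg] using Real.summable_log_one_add_of_summable hsum.neg
  rw [← Real.rexp_tsum_eq_tprod (fun i => sub_pos.2 (ha i)) hlog]
  exact Real.exp_pos _

lemma tprod_one_sub_le_prod_range {a : ℕ → ℝ} (ha₀ : ∀ n, 0 ≤ a n) (ha₁ : ∀ n, a n ≤ 1)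
    (hsum : Summable a) (n : ℕ) : ∏' m, (1 - a m) ≤ ∏ m ∈ range n, (1 - a m) := by
  have hmul : Multipliable fun m => 1 - a m := by
    simpa [sub_eq_add_neg] using Real.multipliable_one_add_of_summable hsum.neg
  refine Antitone.le_of_tendsto (antitone_nat_of_succ_le fun n => ?_)
    hmul.tendsto_prod_tprod_nat n
  rw [prod_range_succ]
  exact mul_le_of_le_one_right (prod_nonneg fun m _ => sub_nonneg.2 (ha₁ m))
    (sub_le_self _ (ha₀ n))

lemma prod_range_one_sub_mul_le {a p : ℕ → ℝ} (ha : ∀ n, a n ≤ 1)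
    (hstep : ∀ n, (1 - a n) * p n ≤ p (n + 1)) (n : ℕ) :
    (∏ m ∈ range n, (1 - a m)) * p 0 ≤ p n := by
  induction n with
  | zero => simp
  | succ n ih =>
    calc (∏ m ∈ range (n + 1), (1 - a m)) * p 0
        = (1 - a n) * ((∏ m ∈ range n, (1 - a m)) * p 0) := by rw [prod_range_succ]; ring
      _ ≤ (1 - a n) * p n := mul_le_mul_of_nonneg_left ih (sub_nonneg.2 (ha n))
      _ ≤ p (n + 1) := hstep n

/-- given an inverse system of finite groups with surjective transition
maps, if for some `k ≥ 2` the zeta quantities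
`ζ_n(k-1) = Σ_{[M] ∈ G(L_{n+1}|L_n)} [L_{n+1}:M]^{-(k-1)}` satisfy `ζ_n(k-1) < 1`
for all `n ≥ n₁` and have finite sum over `n ≥ n₁`, and `L_{n₁}` is generated by `k`
elements, then `inf_n p_k(L_n) ≥ ∏_{n ≥ n₁} (1 - ζ_n(k-1)) ⬝ p_k(L_{n₁}) > 0`; in
particular the inverse limit is positively finitely generated (the probabilities
`p_k(L_n)` stay bounded away from `0`). -/
theorem positively_finitely_generated_of_zeta_summable
    (L : ℕ → Type*) [∀ n, Group (L n)] [∀ n, Fintype (L n)]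
    (f : ∀ n, L (n + 1) →* L n) (hf : ∀ n, Function.Surjective (f n))
    (k : ℕ) (hk : 2 ≤ k) (n₁ : ℕ)
    (R : ∀ n, Finset (Subgroup (L (n + 1))))
    (hR : ∀ n, IsConjClassReps (f n) (R n))
    (ζ : ℕ → ℝ) (hζ : ∀ n, ζ n = ∑ M ∈ R n, (1 : ℝ) / (M.index : ℝ) ^ (k - 1))
    (hζlt : ∀ n ≥ n₁, ζ n < 1)
    (hsum : Summable fun m : ℕ => ζ (n₁ + m))
    (hgen : ∃ S : Finset (L n₁), S.card ≤ k ∧ Subgroup.closure (S : Set (L n₁)) = ⊤) :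
    (⨅ n : ℕ, pgen k (L n)) ≥ (∏' m : ℕ, (1 - ζ (n₁ + m))) * pgen k (L n₁) ∧
      0 < (∏' m : ℕ, (1 - ζ (n₁ + m))) * pgen k (L n₁) ∧
      ∃ c > 0, ∀ n, c ≤ pgen k (L n) := by
  have hζ₀ (n : ℕ) : 0 ≤ ζ n := hζ n ▸ sum_nonneg fun _ _ => by positivity
  have hζ₁ (m : ℕ) : ζ (n₁ + m) < 1 := hζlt _ (Nat.le_add_right _ _)
  have hstep (n : ℕ) : (1 - ζ n) * pgen k (L n) ≤ pgen k (L (n + 1)) :=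
    hζ n ▸ one_sub_mul_pgen_le (by omega) (hf n) (hR n)
  have hanti : Antitone fun n => pgen k (L n) :=
    antitone_nat_of_succ_le fun n => pgen_le_of_surjective k (hf n)
  obtain ⟨S, hSk, hS⟩ := hgen
  obtain ⟨v, hv⟩ := S.exists_fin_subset_range hSk
  have hpos : 0 < (∏' m : ℕ, (1 - ζ (n₁ + m))) * pgen k (L n₁) :=
    mul_pos (tprod_one_sub_pos hζ₁ hsum)
      (pgen_pos (top_le_iff.1 (hS ▸ Subgroup.closure_mono hv)))
  have hbound (n : ℕ) : (∏' m : ℕ, (1 - ζ (n₁ + m))) * pgen k (L n₁) ≤ pgen k (L n) :=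
    calc (∏' m : ℕ, (1 - ζ (n₁ + m))) * pgen k (L n₁)
        ≤ (∏ m ∈ range n, (1 - ζ (n₁ + m))) * pgen k (L n₁) :=
          mul_le_mul_of_nonneg_right
            (tprod_one_sub_le_prod_range (fun _ => hζ₀ _) (fun m => (hζ₁ m).le) hsum n)
            (pgen_nonneg k _)
      _ ≤ pgen k (L (n₁ + n)) :=
          prod_range_one_sub_mul_le (p := fun m => pgen k (L (n₁ + m)))
            (fun m => (hζ₁ m).le) (fun m => hstep (n₁ + m)) n
      _ ≤ pgen k (L n) := hanti (Nat.le_add_left n n₁)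
  exact ⟨le_ciInf hbound, hpos, _, hpos, hbound⟩
end

section
/- Let X act transitively on finite sets Ω_1, Ω_2, let B_1, B_2 be nontrivial perfect finite groups with trivial center, and Y = X ⋉ (B_1^{Ω_1} × B_2^{Ω_2}). If M < Y is a proper maximal clean subgroup surjecting onto X, then B_1 and B_2 are non-abelian simple, M ∩ (B_1^{Ω_1} × B_2^{Ω_2}) is the graph of an isomorphism B_1^{Ω_1} → B_2^{Ω_2}, M = N_Y(M ∩ (B_1^{Ω_1} × B_2^{Ω_2})), and [Y : M] ≥ |B_1|^{|Ω_1|}. -/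
open SemidirectProduct

variable (X : Type*) [Group X] (Ω₁ Ω₂ : Type*) (B₁ B₂ : Type*)
  [MulAction X Ω₁] [MulAction X Ω₂] [Group B₁] [Group B₂]

/-- The action of `X` on `B₁^{Ω₁} × B₂^{Ω₂}` permuting coordinates. -/
def permAut₂ : X →* MulAut ((Ω₁ → B₁) × (Ω₂ → B₂)) where
  toFun x :=
    { toFun := fun f => (fun ω => f.1 (x⁻¹ • ω), fun ω => f.2 (x⁻¹ • ω))
      invFun := fun f => (fun ω => f.1 (x • ω), fun ω => f.2 (x • ω))
      left_inv := fun f => by ext ω <;> simp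
      right_inv := fun f => by ext ω <;> simp
      map_mul' := fun f g => rfl }
  map_one' := by ext f ω <;> simp
  map_mul' := fun x y => by ext f ω <;> simp [mul_smul]

/-!
Write `K = B₁^{Ω₁} × B₂^{Ω₂}` and `D = M ∩ K`. If `N₁ ⊴ B₁`, `N₂ ⊴ B₂` are not both trivial,
cleanness keeps the normal subgroup `N₁^{Ω₁} × N₂^{Ω₂}` of `Y` out of `M`, so by maximality it
supplements `M`. For `(N₁, N₂) = (1, B₂)` this makes `D` project onto `B₁^{Ω₁}`, and, since
`1 × B₂^{Ω₂}` centralizes `B₁^{Ω₁} × 1`, it makes `M ∩ (B₁^{Ω₁} × 1)` normal in `Y`.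

A normal `X`-invariant subgroup `S ≤ B^Ω` containing no `N^Ω` with `1 ≠ N ⊴ B` is trivial when
`Z(B) = 1`: the `n ∈ B` whose copy at a point lies in `S` form, by transitivity, a normal
subgroup `N` with `N^Ω ≤ S`, so `N = 1`; but for `f ∈ S` the commutator of `f` with `b` at `ω`
is `[f ω, b]` at `ω`, so `f ω` is central. Hence `D` meets both factors trivially and, by
Goursat, is the graph of an isomorphism.

Supplementing `M` by `N^{Ω₁} × 1` now forces `N = B₁`; `D` is not normal in `K` as `B₁` is not
abelian, so the maximal `M` is the normalizer of `D`; and `B₁^{Ω₁} × 1` embeds into `Y / M`.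
-/

open Subgroup Function
open scoped commutatorElement Pointwise

theorem Pi.mulSingle_commutatorElement {ι B : Type*} [Group B] [DecidableEq ι] (f : ι → B)
    (i : ι) (b : B) : Pi.mulSingle i ⁅f i, b⁆ = ⁅f, (Pi.mulSingle i b : ι → B)⁆ := by
  funext j
  rcases eq_or_ne j i with rfl | hj
  · simp [commutatorElement_def]
  · simp [commutatorElement_def, Pi.mulSingle_eq_of_ne hj]

namespace Subgroup

section Group
variable {G : Type*} [Group G]

theorem exists_mul_ne_mul_of_center_eq_bot [Nontrivial G] (h : center G = ⊥) :
    ∃ a b : G, a * b ≠ b * a := by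
  by_contra! hcomm
  obtain ⟨a, ha⟩ := exists_ne (1 : G)
  exact ha (by rw [← mem_bot, ← h]; exact mem_center_iff.2 fun g => hcomm g a)

theorem exists_mul_eq_of_sup_eq_top {H K : Subgroup G} [K.Normal] (h : H ⊔ K = ⊤) (g : G) :
    ∃ x ∈ H, ∃ y ∈ K, x * y = g := by
  have hg : g ∈ (H : Set G) * K := by
    rw [← mul_normal, h]
    trivial
  exact hg

theorem le_normalizer_inf_of_normal (M : Subgroup G) {H : Subgroup G} [H.Normal] :
    M ≤ normalizer ((M ⊓ H : Subgroup G) : Set G) :=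
  (le_inf M.le_normalizer le_normalizer_of_normal).trans inf_normalizer_le_normalizer_inf

theorem normal_inf_of_sup_eq_top {M H C : Subgroup G} [H.Normal] (hC : C ≤ centralizer H)
    (hMC : M ⊔ C = ⊤) : (M ⊓ H).Normal := by
  refine normalizer_eq_top_iff.1 (top_le_iff.1 (hMC ▸ sup_le M.le_normalizer_inf_of_normal ?_))
  exact hC.trans ((centralizer_le inf_le_right).trans (centralizer_le_normalizer _))

theorem card_le_index_of_inf_eq_bot [Finite G] {M H : Subgroup G} (h : M ⊓ H = ⊥) :
    Nat.card H ≤ M.index :=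
  calc Nat.card H = (⊥ : Subgroup G).relIndex H := (relIndex_bot_left H).symm
    _ = M.relIndex H := by rw [← h, inf_relIndex_right]
    _ ≤ M.relIndex ⊤ := relIndex_le_of_le_right le_top (by simp [index_ne_zero_of_finite])
    _ = M.index := M.relIndex_top_right

end Group

section Pi
variable {G Ω B : Type*} [Group G] [MulAction G Ω] [Group B]

instance normal_pi (N : Subgroup B) [N.Normal] : (pi Set.univ fun _ : Ω => N).Normal :=
  ⟨fun _ hf g ω _ => ‹N.Normal›.conj_mem _ (hf ω trivial) (g ω)⟩

theorem eq_top_of_pi_eq_top [Nonempty Ω] {N : Subgroup B}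
    (h : pi Set.univ (fun _ : Ω => N) = ⊤) : N = ⊤ := by
  obtain ⟨ω⟩ := ‹Nonempty Ω›
  exact eq_top_iff.2 fun b _ => (h ▸ mem_top (fun _ : Ω => b) : _ ∈ pi Set.univ _) ω trivial

theorem mulSingle_commutatorElement_mem [DecidableEq Ω] {S : Subgroup (Ω → B)} [S.Normal]
    {f : Ω → B} (hf : f ∈ S) (ω : Ω) (b : B) : Pi.mulSingle ω ⁅f ω, b⁆ ∈ S := by
  rw [Pi.mulSingle_commutatorElement]
  exact commutator_le_left S ⊤ (commutator_mem_commutator hf (mem_top _))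

theorem comap_mulSingle_le_comap_mulSingle_smul [DecidableEq Ω] {S : Subgroup (Ω → B)}
    (hS : ∀ (g : G), ∀ f ∈ S, (fun ω => f (g⁻¹ • ω)) ∈ S) (g : G) (ω : Ω) :
    S.comap (MonoidHom.mulSingle _ ω) ≤ S.comap (MonoidHom.mulSingle _ (g • ω)) := by
  intro b hb
  have : (fun ω' => (Pi.mulSingle ω b : Ω → B) (g⁻¹ • ω')) = Pi.mulSingle (g • ω) b := by
    funext ω'
    simp [Pi.mulSingle_apply, inv_smul_eq_iff]
  simpa [this] using hS g _ hb

theorem eq_bot_of_pi_le_imp_eq_bot [MulAction.IsPretransitive G Ω] [Finite Ω]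
    (hB : center B = ⊥) (S : Subgroup (Ω → B)) [S.Normal]
    (hS : ∀ (g : G), ∀ f ∈ S, (fun ω => f (g⁻¹ • ω)) ∈ S)
    (hclean : ∀ N : Subgroup B, N.Normal → pi Set.univ (fun _ : Ω => N) ≤ S → N = ⊥) :
    S = ⊥ := by
  classical
  have hU : ∀ ω ω' : Ω,
      S.comap (MonoidHom.mulSingle _ ω) = S.comap (MonoidHom.mulSingle _ ω') := by
    intro ω ω'
    obtain ⟨g, rfl⟩ := MulAction.exists_smul_eq G ω ω'
    refine le_antisymm (comap_mulSingle_le_comap_mulSingle_smul hS g ω) ?_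
    simpa using comap_mulSingle_le_comap_mulSingle_smul hS g⁻¹ (g • ω)
  have hUbot : ∀ ω : Ω, S.comap (MonoidHom.mulSingle _ ω) = ⊥ := fun ω =>
    hclean _ (‹S.Normal›.comap _) (pi_le_iff.2 fun ω' => hU ω ω' ▸ map_comap_le _ _)
  refine (eq_bot_iff_forall S).2 fun f hf => funext fun ω => ?_
  rw [Pi.one_apply, ← mem_bot, ← hB, mem_center_iff]
  intro b
  have hcomm : ⁅f ω, b⁆ ∈ S.comap (MonoidHom.mulSingle (fun _ => B) ω) :=
    mulSingle_commutatorElement_mem hf ω b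
  rw [hUbot, mem_bot, commutatorElement_eq_one_iff_mul_comm] at hcomm
  exact hcomm.symm

end Pi

section Prod
variable {G H : Type*} [Group G] [Group H] {I : Subgroup (G × H)}

theorem surjective_fst_of_sup_bot_prod_top (h : I ⊔ (⊥ : Subgroup G).prod ⊤ = ⊤) :
    Surjective (Prod.fst ∘ I.subtype) := by
  intro a
  obtain ⟨x, hx, y, hy, hxy⟩ := exists_mul_eq_of_sup_eq_top h (a, 1)
  refine ⟨⟨x, hx⟩, ?_⟩
  simpa [mem_bot.1 hy.1] using congrArg Prod.fst hxy

theorem surjective_snd_of_sup_top_prod_bot (h : I ⊔ (⊤ : Subgroup G).prod ⊥ = ⊤) :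
    Surjective (Prod.snd ∘ I.subtype) := by
  intro b
  obtain ⟨x, hx, y, hy, hxy⟩ := exists_mul_eq_of_sup_eq_top h (1, b)
  refine ⟨⟨x, hx⟩, ?_⟩
  simpa [mem_bot.1 hy.2] using congrArg Prod.snd hxy

theorem injective_fst_of_goursatSnd_eq_bot (h : I.goursatSnd = ⊥) :
    Injective (Prod.fst ∘ I.subtype) := by
  rintro ⟨x, hx⟩ ⟨y, hy⟩ hxy
  have hmem : x.2⁻¹ * y.2 ∈ I.goursatSnd := by
    rw [mem_goursatSnd]
    convert I.mul_mem (I.inv_mem hx) hy using 1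
    ext <;> simp_all
  rw [h, mem_bot, inv_mul_eq_one] at hmem
  exact Subtype.ext (Prod.ext hxy hmem)

theorem injective_snd_of_goursatFst_eq_bot (h : I.goursatFst = ⊥) :
    Injective (Prod.snd ∘ I.subtype) := by
  rintro ⟨x, hx⟩ ⟨y, hy⟩ hxy
  have hmem : x.1⁻¹ * y.1 ∈ I.goursatFst := by
    rw [mem_goursatFst]
    convert I.mul_mem (I.inv_mem hx) hy using 1
    ext <;> simp_all
  rw [h, mem_bot, inv_mul_eq_one] at hmem
  exact Subtype.ext (Prod.ext hmem hxy)

theorem eq_top_of_sup_prod_bot_eq_top {P : Subgroup G} [P.Normal] (hI : I.goursatFst = ⊥)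
    (h : I ⊔ P.prod ⊥ = ⊤) : P = ⊤ := by
  refine eq_top_iff.2 fun a _ => ?_
  obtain ⟨x, hx, y, hy, hxy⟩ := exists_mul_eq_of_sup_eq_top h (a, 1)
  have hx' : x = (a * y.1⁻¹, 1) := by
    rw [eq_mul_inv_of_mul_eq hxy]
    ext <;> simp [mem_bot.1 hy.2]
  have hmem : a * y.1⁻¹ ∈ I.goursatFst := mem_goursatFst.2 (hx' ▸ hx)
  rw [hI, mem_bot, mul_inv_eq_one] at hmem
  exact hmem ▸ hy.1

theorem eq_top_of_sup_bot_prod_eq_top {Q : Subgroup H} [Q.Normal] (hI : I.goursatSnd = ⊥)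
    (h : I ⊔ (⊥ : Subgroup G).prod Q = ⊤) : Q = ⊤ := by
  refine eq_top_iff.2 fun b _ => ?_
  obtain ⟨x, hx, y, hy, hxy⟩ := exists_mul_eq_of_sup_eq_top h (1, b)
  have hx' : x = (1, b * y.2⁻¹) := by
    rw [eq_mul_inv_of_mul_eq hxy]
    ext <;> simp [mem_bot.1 hy.1]
  have hmem : b * y.2⁻¹ ∈ I.goursatSnd := mem_goursatSnd.2 (hx' ▸ hx)
  rw [hI, mem_bot, mul_inv_eq_one] at hmem
  exact hmem ▸ hy.2

theorem commute_of_normal_of_goursatFst_eq_bot [I.Normal] (hI : I.goursatFst = ⊥)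
    (h : Surjective (Prod.fst ∘ I.subtype)) (a b : G) : Commute a b := by
  obtain ⟨⟨x, hx⟩, rfl⟩ := h b
  have hmem : ⁅a, x.1⁆ ∈ I.goursatFst := by
    rw [mem_goursatFst]
    convert I.mul_mem (‹I.Normal›.conj_mem x hx (a, 1)) (I.inv_mem hx) using 1
    ext <;> simp [commutatorElement_def]
  rwa [hI, mem_bot, commutatorElement_eq_one_iff_commute] at hmem

end Prod

end Subgroup

namespace SemidirectProduct

section
variable {N G : Type*} [Group N] [Group G] {φ : G →* MulAut N}

theorem normal_map_inl {S : Subgroup N} [S.Normal] (hS : ∀ g, ∀ n ∈ S, φ g n ∈ S) :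
    (S.map (inl : N →* N ⋊[φ] G)).Normal := by
  refine ⟨?_⟩
  rintro _ ⟨n, hn, rfl⟩ y
  refine ⟨y.left * φ y.right n * y.left⁻¹, ‹S.Normal›.conj_mem _ (hS _ _ hn) _, ?_⟩
  conv_rhs => rw [← inl_left_mul_inr_right y]
  simp [mul_assoc, inl_aut, -inl_left_mul_inr_right]

theorem comap_inl_sup_eq_top {M : Subgroup (N ⋊[φ] G)} {S : Subgroup N}
    [(S.map (inl : N →* N ⋊[φ] G)).Normal] (h : M ⊔ S.map inl = ⊤) : M.comap inl ⊔ S = ⊤ := by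
  refine eq_top_iff.2 fun n _ => ?_
  obtain ⟨m, hm, _, ⟨s, hs, rfl⟩, hms⟩ := exists_mul_eq_of_sup_eq_top h (inl n)
  have hm' : n * s⁻¹ ∈ M.comap inl := by
    rwa [mem_comap, map_mul, map_inv, ← hms, mul_inv_cancel_right]
  simpa using mul_mem (mem_sup_left hm') (mem_sup_right hs)

end

section
variable {A C G : Type*} [Group A] [Group C] [Group G] {φ : G →* MulAut (A × C)}
  {M : Subgroup ((A × C) ⋊[φ] G)}

theorem eq_normalizer_inf_range_inl (hM : IsCoatom M)
    (hfst : Surjective (Prod.fst ∘ (M.comap inl).subtype))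
    (hgoursat : (M.comap inl).goursatFst = ⊥) (hA : ∃ a b : A, a * b ≠ b * a) :
    M = normalizer ((M ⊓ (inl : A × C →* (A × C) ⋊[φ] G).range : Subgroup _) : Set _) := by
  have : (inl : A × C →* (A × C) ⋊[φ] G).range.Normal := by
    rw [range_inl_eq_ker_rightHom]
    infer_instance
  refine ((hM.le_iff_eq fun htop => ?_).1 M.le_normalizer_inf_of_normal).symm
  have : (M.comap inl).Normal := by
    simpa [comap_inf] using (normalizer_eq_top_iff.1 htop).comap (inl : A × C →* (A × C) ⋊[φ] G)
  obtain ⟨a, b, hab⟩ := hA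
  exact hab (commute_of_normal_of_goursatFst_eq_bot hgoursat hfst a b).eq

theorem card_le_index [Finite ((A × C) ⋊[φ] G)] (hgoursat : (M.comap inl).goursatFst = ⊥) :
    Nat.card A ≤ M.index := by
  let ι : A →* (A × C) ⋊[φ] G := inl.comp (MonoidHom.inl A C)
  have hι : Injective ι := inl_injective.comp (Prod.mk_left_injective 1)
  have hinf : M ⊓ ι.range = ⊥ := by
    refine (eq_bot_iff_forall _).2 ?_
    rintro _ ⟨hm, a, rfl⟩
    have : a ∈ (M.comap inl).goursatFst := mem_goursatFst.2 hm
    simp_all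
  calc Nat.card A = Nat.card ι.range :=
        Nat.card_congr (MonoidHom.ofInjective hι).toEquiv
    _ ≤ M.index := card_le_index_of_inf_eq_bot hinf

end

end SemidirectProduct

section
variable {X Ω₁ Ω₂ B₁ B₂}

local notation "Y" => ((Ω₁ → B₁) × (Ω₂ → B₂)) ⋊[permAut₂ X Ω₁ Ω₂ B₁ B₂] X

abbrev powerProd (N₁ : Subgroup B₁) (N₂ : Subgroup B₂) : Subgroup Y :=
  ((pi Set.univ fun _ : Ω₁ => N₁).prod (pi Set.univ fun _ : Ω₂ => N₂)).map inl

instance normal_powerProd (N₁ : Subgroup B₁) (N₂ : Subgroup B₂) [N₁.Normal] [N₂.Normal] :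
    (powerProd N₁ N₂ : Subgroup Y).Normal :=
  normal_map_inl fun _ _ hp => ⟨fun _ _ => hp.1 _ trivial, fun _ _ => hp.2 _ trivial⟩

theorem powerProd_bot_top_le_centralizer :
    (powerProd ⊥ ⊤ : Subgroup Y) ≤ centralizer (powerProd ⊤ ⊥ : Subgroup Y) := by
  rintro _ ⟨p, ⟨hp₁, -⟩, rfl⟩ _ ⟨q, ⟨-, hq₂⟩, rfl⟩
  rw [← map_mul, ← map_mul]
  congr 1
  ext ω
  · simp [mem_bot.1 (hp₁ ω trivial)]
  · simp [mem_bot.1 (hq₂ ω trivial)]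

def IsClean (M : Subgroup Y) : Prop :=
  ∀ (N₁ : Subgroup B₁) (N₂ : Subgroup B₂), N₁.Normal → N₂.Normal →
    powerProd N₁ N₂ ≤ M → N₁ = ⊥ ∧ N₂ = ⊥

namespace IsClean

theorem sup_powerProd_eq_top {M : Subgroup Y} (hc : IsClean M) (hM : IsCoatom M)
    {N₁ : Subgroup B₁} {N₂ : Subgroup B₂} [N₁.Normal] [N₂.Normal]
    (hne : N₁ ≠ ⊥ ∨ N₂ ≠ ⊥) : M ⊔ powerProd N₁ N₂ = ⊤ :=
  codisjoint_iff.1 <| hM.not_le_iff_codisjoint.1 fun hle => by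
    have := hc N₁ N₂ ‹_› ‹_› hle
    tauto

theorem comap_inl_sup_pi_prod_pi_eq_top {M : Subgroup Y} (hc : IsClean M) (hM : IsCoatom M)
    {N₁ : Subgroup B₁} {N₂ : Subgroup B₂} [N₁.Normal] [N₂.Normal] (hne : N₁ ≠ ⊥ ∨ N₂ ≠ ⊥) :
    M.comap inl ⊔ (pi Set.univ fun _ : Ω₁ => N₁).prod (pi Set.univ fun _ : Ω₂ => N₂) = ⊤ :=
  comap_inl_sup_eq_top (hc.sup_powerProd_eq_top hM hne)

theorem surjective_fst {M : Subgroup Y} (hc : IsClean M) (hM : IsCoatom M) [Nontrivial B₂] :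
    Surjective (Prod.fst ∘ (M.comap inl).subtype) :=
  surjective_fst_of_sup_bot_prod_top <| by
    simpa only [pi_top, pi_bot] using hc.comap_inl_sup_pi_prod_pi_eq_top hM (N₁ := ⊥) (N₂ := ⊤)
      (.inr top_ne_bot)

theorem surjective_snd {M : Subgroup Y} (hc : IsClean M) (hM : IsCoatom M) [Nontrivial B₁] :
    Surjective (Prod.snd ∘ (M.comap inl).subtype) :=
  surjective_snd_of_sup_top_prod_bot <| by
    simpa only [pi_top, pi_bot] using hc.comap_inl_sup_pi_prod_pi_eq_top hM (N₁ := ⊤) (N₂ := ⊥)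
      (.inl top_ne_bot)

theorem goursatFst_eq_bot {M : Subgroup Y} (hc : IsClean M) (hM : IsCoatom M) [Nontrivial B₂]
    [Finite Ω₁] [MulAction.IsPretransitive X Ω₁]
    (hz : center B₁ = ⊥) : (M.comap inl).goursatFst = ⊥ := by
  have hM₁ : (M ⊓ powerProd ⊤ ⊥).Normal := normal_inf_of_sup_eq_top
    powerProd_bot_top_le_centralizer (hc.sup_powerProd_eq_top hM (.inr top_ne_bot))
  let ι : (Ω₁ → B₁) →* Y := inl.comp (MonoidHom.inl _ _)
  have hS : (M.comap inl).goursatFst = (M ⊓ powerProd ⊤ ⊥).comap ι := by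
    ext f
    simp [ι, mem_prod, mem_pi]
  rw [hS]
  have := hM₁.comap ι
  refine eq_bot_of_pi_le_imp_eq_bot (G := X) hz _ (fun x f hf => ?_)
    fun N hN hle => (hc N ⊥ hN inferInstance ?_).1
  · have hperm : ι (fun ω => f (x⁻¹ • ω)) = inr x * ι f * (inr x)⁻¹ := by
      rw [← map_inv]
      exact inl_aut (φ := permAut₂ X Ω₁ Ω₂ B₁ B₂) x (f, 1)
    rw [mem_comap, hperm]
    exact hM₁.conj_mem _ hf (inr x)
  · rintro _ ⟨p, ⟨hp₁, hp₂⟩, rfl⟩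
    rw [show p = (p.1, 1) from Prod.ext rfl (funext fun ω => mem_bot.1 (hp₂ ω trivial))]
    exact (hle hp₁).1

theorem goursatSnd_eq_bot {M : Subgroup Y} (hc : IsClean M) (hM : IsCoatom M) [Nontrivial B₁]
    [Finite Ω₂] [MulAction.IsPretransitive X Ω₂]
    (hz : center B₂ = ⊥) : (M.comap inl).goursatSnd = ⊥ := by
  have hM₂ : (M ⊓ powerProd ⊥ ⊤).Normal :=
    normal_inf_of_sup_eq_top (le_centralizer_iff.1 powerProd_bot_top_le_centralizer)
      (hc.sup_powerProd_eq_top hM (.inl top_ne_bot))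
  let ι : (Ω₂ → B₂) →* Y := inl.comp (MonoidHom.inr _ _)
  have hS : (M.comap inl).goursatSnd = (M ⊓ powerProd ⊥ ⊤).comap ι := by
    ext f
    simp [ι, mem_prod, mem_pi]
  rw [hS]
  have := hM₂.comap ι
  refine eq_bot_of_pi_le_imp_eq_bot (G := X) hz _ (fun x f hf => ?_)
    fun N hN hle => (hc ⊥ N inferInstance hN ?_).2
  · have hperm : ι (fun ω => f (x⁻¹ • ω)) = inr x * ι f * (inr x)⁻¹ := by
      rw [← map_inv]
      exact inl_aut (φ := permAut₂ X Ω₁ Ω₂ B₁ B₂) x (1, f)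
    rw [mem_comap, hperm]
    exact hM₂.conj_mem _ hf (inr x)
  · rintro _ ⟨p, ⟨hp₁, hp₂⟩, rfl⟩
    rw [show p = (1, p.2) from Prod.ext (funext fun ω => mem_bot.1 (hp₁ ω trivial)) rfl]
    exact (hle hp₂).1

theorem isSimpleGroup_fst {M : Subgroup Y} (hc : IsClean M) (hM : IsCoatom M) [Nontrivial B₁]
    [Nonempty Ω₁] (hgoursat : (M.comap inl).goursatFst = ⊥) : IsSimpleGroup B₁ :=
  ⟨fun N _ => or_iff_not_imp_left.2 fun hN => eq_top_of_pi_eq_top <|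
    eq_top_of_sup_prod_bot_eq_top hgoursat <| by
      simpa only [pi_bot] using hc.comap_inl_sup_pi_prod_pi_eq_top hM (N₂ := ⊥) (.inl hN)⟩

theorem isSimpleGroup_snd {M : Subgroup Y} (hc : IsClean M) (hM : IsCoatom M) [Nontrivial B₂]
    [Nonempty Ω₂] (hgoursat : (M.comap inl).goursatSnd = ⊥) : IsSimpleGroup B₂ :=
  ⟨fun N _ => or_iff_not_imp_left.2 fun hN => eq_top_of_pi_eq_top <|
    eq_top_of_sup_bot_prod_eq_top hgoursat <| by
      simpa only [pi_bot] using hc.comap_inl_sup_pi_prod_pi_eq_top hM (N₁ := ⊥) (.inr hN)⟩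

end IsClean

end

theorem two_factor_clean_maximal
    [Fintype X] [Fintype Ω₁] [Fintype Ω₂] [Nonempty Ω₁] [Nonempty Ω₂]
    [MulAction.IsPretransitive X Ω₁] [MulAction.IsPretransitive X Ω₂]
    [Fintype B₁] [Fintype B₂] [Nontrivial B₁] [Nontrivial B₂]
    (hz₁ : Subgroup.center B₁ = ⊥) (hz₂ : Subgroup.center B₂ = ⊥)
    (M : Subgroup (((Ω₁ → B₁) × (Ω₂ → B₂)) ⋊[permAut₂ X Ω₁ Ω₂ B₁ B₂] X))
    (hM : IsCoatom M)
    (hclean : ∀ (N₁ : Subgroup B₁) (N₂ : Subgroup B₂), N₁.Normal → N₂.Normal →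
      Subgroup.map (inl : ((Ω₁ → B₁) × (Ω₂ → B₂)) →* _)
        ((Subgroup.pi Set.univ fun _ : Ω₁ => N₁).prod
          (Subgroup.pi Set.univ fun _ : Ω₂ => N₂)) ≤ M →
      N₁ = ⊥ ∧ N₂ = ⊥) :
    (IsSimpleGroup B₁ ∧ ∃ a b : B₁, a * b ≠ b * a) ∧
    (IsSimpleGroup B₂ ∧ ∃ a b : B₂, a * b ≠ b * a) ∧
    (∃ e : (Ω₁ → B₁) ≃* (Ω₂ → B₂),
      M ⊓ (inl : ((Ω₁ → B₁) × (Ω₂ → B₂)) →* _).range =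
        Subgroup.map (inl : ((Ω₁ → B₁) × (Ω₂ → B₂)) →* _)
          (MonoidHom.eqLocus (e.toMonoidHom.comp (MonoidHom.fst _ _)) (MonoidHom.snd _ _))) ∧
    M = Subgroup.normalizer ((M ⊓ (inl : ((Ω₁ → B₁) × (Ω₂ → B₂)) →* _).range : Subgroup _) : Set _) ∧
    (Fintype.card B₁) ^ (Fintype.card Ω₁) ≤ M.index := by
  have hc : IsClean M := hclean
  have hfst := hc.surjective_fst hM
  have hFst := hc.goursatFst_eq_bot hM hz₁
  have hSnd := hc.goursatSnd_eq_bot hM hz₂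
  obtain ⟨e, he⟩ := exists_mulEquiv_eq_graph
    ⟨injective_fst_of_goursatSnd_eq_bot hSnd, hfst⟩
    ⟨injective_snd_of_goursatFst_eq_bot hFst, hc.surjective_snd hM⟩
  obtain ⟨a, b, hab⟩ := exists_mul_ne_mul_of_center_eq_bot hz₁
  have hnoncomm : ∃ f g : Ω₁ → B₁, f * g ≠ g * f :=
    ⟨fun _ => a, fun _ => b, fun h => hab (congrFun h (Classical.arbitrary Ω₁))⟩
  have : Finite (((Ω₁ → B₁) × (Ω₂ → B₂)) ⋊[permAut₂ X Ω₁ Ω₂ B₁ B₂] X) :=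
    .of_equiv _ equivProd.symm
  refine ⟨⟨hc.isSimpleGroup_fst hM hFst, a, b, hab⟩,
    ⟨hc.isSimpleGroup_snd hM hSnd, exists_mul_ne_mul_of_center_eq_bot hz₂⟩, ⟨e, ?_⟩,
    eq_normalizer_inf_range_inl hM hfst hFst hnoncomm, ?_⟩
  · rw [inf_comm, ← map_comap_eq, he]
    rfl
  · simpa [Nat.card_fun, Nat.card_eq_fintype_card] using card_le_index hFst
end
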